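/- Let A ∈ ℝ^{N×r} with rank(A) = r and orthonormal column-space basis U_A, let B ∈ ℝ^{N×n}, let B^⊥ = B − U_A U_Aᵀ B, and let R² = ‖B^⊥‖_F². Let p ∈ [0,1]^N be a probability distribution such that for some β ∈ (0,1], pᵢ ≥ β ℓᵢ(A)/r for all i ∈ [N], where ℓᵢ(A) = ‖U_A(i,:)‖₂² are the row leverage scores, and let S ∈ ℝ^{s×N} ~ RandSample(s, p). Then E[‖U_Aᵀ Sᵀ S B^⊥‖_F²] ≤ (r/(β s)) R². -/

import Mathlib

open Matrix MeasureTheory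

/-- Squared Frobenius norm of a real matrix. -/
noncomputable def frobSq {m n : Type*} [Fintype m] [Fintype n] (M : Matrix m n ℝ) : ℝ :=
  ∑ i, ∑ j, (M i j) ^ 2

/-- Square of the smallest singular value of a matrix, as the infimum of
squared norms `‖M x‖₂²` over unit vectors `x`. -/
noncomputable def sigmaMinSq {m n : Type*} [Fintype m] [Fintype n] (M : Matrix m n ℝ) : ℝ :=
  sInf {c : ℝ | ∃ x : n → ℝ, ∑ i, (x i) ^ 2 = 1 ∧ c = ∑ j, (M.mulVec x j) ^ 2}

/-- Square of the largest singular value of a matrix. -/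
noncomputable def sigmaMaxSq {m n : Type*} [Fintype m] [Fintype n] (M : Matrix m n ℝ) : ℝ :=
  sSup {c : ℝ | ∃ x : n → ℝ, ∑ i, (x i) ^ 2 = 1 ∧ c = ∑ j, (M.mulVec x j) ^ 2}

/-- The weighted row-sampling ("RandSample") matrix determined by the sampled
indices `ξ : Fin s → Fin N` and the sampling probabilities `p`:
`S j i = 1/√(s pᵢ)` if `ξ j = i` and `0` otherwise. -/
noncomputable def randSampleMatrix {N : ℕ} (s : ℕ) (p : Fin N → ℝ) (ξ : Fin s → Fin N) :
    Matrix (Fin s) (Fin N) ℝ :=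
  fun j i => if ξ j = i then 1 / Real.sqrt (s * p i) else 0

/-- The measure on `Fin N` in which index `i` has probability `p i`. -/
noncomputable def sampleMeasure {N : ℕ} (p : Fin N → ℝ) : Measure (Fin N) :=
  ∑ i, ENNReal.ofReal (p i) • Measure.dirac i

/-- The law of `s` i.i.d. indices, each drawn from the distribution `p` on `Fin N`. -/
noncomputable def sampleMeasurePi {N : ℕ} (s : ℕ) (p : Fin N → ℝ) :
    Measure (Fin s → Fin N) :=
  Measure.pi fun _ => sampleMeasure p

/-! Entry `(a, b)` of `Uᵀ Sᵀ S B^⊥` is a sum of `s` i.i.d. copies of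
`X = U(ξ, a) B^⊥(ξ, b) / (s p_ξ)`, whose mean is `(Uᵀ B^⊥)_{ab} / s = 0`. Hence its second moment
is the variance of an independent sum, `s E[X²]`. Summing over `(a, b)` gives
`∑ᵢ ℓᵢ ‖B^⊥(i,:)‖² / (s pᵢ)`, and the leverage condition bounds `ℓᵢ / pᵢ` by `r / β`. -/

open ProbabilityTheory

lemma integral_sq_sum_comp_eval_of_integral_eq_zero {α ι : Type*} [MeasurableSpace α]
    [Fintype ι] (μ : Measure α) [IsProbabilityMeasure μ] {f : α → ℝ} (hf : MemLp f 2 μ)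
    (hf0 : ∫ x, f x ∂μ = 0) :
    ∫ ξ, (∑ j, f (ξ j)) ^ 2 ∂(Measure.pi fun _ : ι => μ) = Fintype.card ι * ∫ x, f x ^ 2 ∂μ := by
  have hint (j : ι) : Integrable (fun ξ : ι → α => f (ξ j)) (Measure.pi fun _ => μ) :=
    integrable_comp_eval (hf.integrable one_le_two)
  have hmean : ∫ ξ, ∑ j, f (ξ j) ∂(Measure.pi fun _ : ι => μ) = 0 := by
    rw [integral_finsetSum _ fun j _ => hint j]
    simp [integral_comp_eval (μ := fun _ : ι => μ) hf.aestronglyMeasurable, hf0]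
  have hvar := variance_sum_pi (μ := fun _ : ι => μ) (X := fun _ => f) fun _ => hf
  rw [Finset.sum_fn, variance_of_integral_eq_zero _ hmean,
    variance_of_integral_eq_zero hf.aestronglyMeasurable.aemeasurable hf0] at hvar
  · simpa using hvar
  · exact Finset.aemeasurable_fun_sum _ fun j _ => (hint j).aemeasurable

lemma isProbabilityMeasure_sampleMeasure {N : ℕ} {p : Fin N → ℝ} (hp0 : ∀ i, 0 ≤ p i)
    (hp1 : ∑ i, p i = 1) : IsProbabilityMeasure (sampleMeasure p) := by
  constructor
  simp [sampleMeasure, ← ENNReal.ofReal_sum_of_nonneg fun i _ => hp0 i, hp1]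

lemma integral_sampleMeasure {N : ℕ} {p : Fin N → ℝ} (hp0 : ∀ i, 0 ≤ p i) (f : Fin N → ℝ) :
    ∫ i, f i ∂(sampleMeasure p) = ∑ i, p i * f i := by
  rw [sampleMeasure, integral_finsetSum_measure fun _ _ =>
    Integrable.of_finite.smul_measure ENNReal.ofReal_ne_top]
  simp [integral_smul_measure, ENNReal.toReal_ofReal (hp0 _)]

lemma randSampleMatrix_mul_apply {N s : ℕ} {k : Type*} [Fintype k] (p : Fin N → ℝ)
    (ξ : Fin s → Fin N) (M : Matrix (Fin N) k ℝ) (j : Fin s) (b : k) :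
    (randSampleMatrix s p ξ * M) j b = M (ξ j) b / Real.sqrt (s * p (ξ j)) := by
  simp [randSampleMatrix, Matrix.mul_apply, div_eq_inv_mul]

lemma transpose_mul_randSampleMatrix_mul_apply {N s : ℕ} {m k : Type*} [Fintype m] [Fintype k]
    {p : Fin N → ℝ} (hp0 : ∀ i, 0 ≤ p i) (ξ : Fin s → Fin N)
    (U : Matrix (Fin N) m ℝ) (B : Matrix (Fin N) k ℝ) (a : m) (b : k) :
    (Uᵀ * (randSampleMatrix s p ξ)ᵀ * (randSampleMatrix s p ξ * B)) a b =
      ∑ j, U (ξ j) a * B (ξ j) b / (s * p (ξ j)) := by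
  rw [← Matrix.transpose_mul, Matrix.mul_apply]
  refine Finset.sum_congr rfl fun j _ => ?_
  rw [Matrix.transpose_apply, randSampleMatrix_mul_apply, randSampleMatrix_mul_apply,
    div_mul_div_comm, Real.mul_self_sqrt (mul_nonneg s.cast_nonneg (hp0 _))]

lemma sum_mul_div_mul_eq_sum_div {N : ℕ} (s : ℝ) (p x : Fin N → ℝ)
    (hx : ∀ i, p i = 0 → x i = 0) :
    ∑ i, p i * (x i / (s * p i)) = (∑ i, x i) / s := by
  rw [Finset.sum_div]
  refine Finset.sum_congr rfl fun i _ => ?_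
  by_cases hpi : p i = 0
  · simp [hpi, hx i hpi]
  · field_simp

lemma integral_frobSq_randSampleMatrix {N s : ℕ} {m k : Type*} [Fintype m] [Fintype k]
    {p : Fin N → ℝ} (hp0 : ∀ i, 0 ≤ p i) (hp1 : ∑ i, p i = 1)
    (U : Matrix (Fin N) m ℝ) (B : Matrix (Fin N) k ℝ) (hUB : Uᵀ * B = 0)
    (hU0 : ∀ i, p i = 0 → ∀ a, U i a = 0) :
    ∫ ξ, frobSq (Uᵀ * (randSampleMatrix s p ξ)ᵀ * (randSampleMatrix s p ξ * B))
        ∂(sampleMeasurePi s p) =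
      ∑ i, (∑ a, U i a ^ 2) * (∑ b, B i b ^ 2) / (s * p i) := by
  have := isProbabilityMeasure_sampleMeasure hp0 hp1
  set f : m → k → Fin N → ℝ := fun a b i => U i a * B i b / (s * p i)
  have hmean (a : m) (b : k) : ∫ i, f a b i ∂(sampleMeasure p) = 0 := by
    rw [integral_sampleMeasure hp0,
      sum_mul_div_mul_eq_sum_div _ _ _ fun i hi => by simp [hU0 i hi]]
    simpa [Matrix.mul_apply] using congrArg (· a b / (s : ℝ)) hUB
  rw [sampleMeasurePi]
  calc _ = ∑ a, ∑ b,
        ∫ ξ, (∑ j, f a b (ξ j)) ^ 2 ∂(Measure.pi fun _ : Fin s => sampleMeasure p) := by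
        simp only [frobSq, transpose_mul_randSampleMatrix_mul_apply hp0 _ U B]
        rw [integral_finsetSum _ fun _ _ => .of_finite]
        simp only [integral_finsetSum _ fun _ _ => Integrable.of_finite]
        rfl
    _ = ∑ a, ∑ b, s * ∑ i, p i * f a b i ^ 2 := by
        simp only [integral_sq_sum_comp_eval_of_integral_eq_zero _ .of_discrete (hmean _ _),
          integral_sampleMeasure hp0, Fintype.card_fin]
    _ = ∑ a, ∑ b, ∑ i, U i a ^ 2 * B i b ^ 2 / (s * p i) := by
        refine Finset.sum_congr rfl fun a _ => Finset.sum_congr rfl fun b _ => ?_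
        rw [Finset.mul_sum]
        refine Finset.sum_congr rfl fun i _ => ?_
        rcases eq_or_ne ((s : ℝ) * p i) 0 with hsp | hsp
        · -- both sides vanish by the convention `x / 0 = 0`
          simp [f, hsp]
        · simp only [f]
          field_simp
    _ = _ := by
        simp only [Finset.sum_mul_sum, Finset.sum_div]
        rw [Finset.sum_congr rfl fun _ _ => Finset.sum_comm]
        exact Finset.sum_comm

section LeverageSampling

variable {N r : ℕ} {U : Matrix (Fin N) (Fin r) ℝ} {p : Fin N → ℝ} {β : ℝ} {i : Fin N}

lemma row_eq_zero_of_leverage_le (hβ : 0 < β) (hlev : β * (∑ j, U i j ^ 2) / r ≤ p i)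
    (hpi : p i = 0) (a : Fin r) : U i a = 0 := by
  have hr : (0 : ℝ) < r := by exact_mod_cast a.pos
  have hrow : ∑ j, U i j ^ 2 ≤ 0 := by
    rw [hpi, div_le_iff₀ hr, zero_mul] at hlev
    exact nonpos_of_mul_nonpos_right hlev hβ
  have := (Finset.sum_eq_zero_iff_of_nonneg fun j _ => sq_nonneg (U i j)).mp
    (le_antisymm hrow (by positivity)) a (Finset.mem_univ a)
  exact pow_eq_zero_iff two_ne_zero |>.mp this

lemma leverage_div_le (hβ : 0 < β) (hp : 0 ≤ p i) (hlev : β * (∑ j, U i j ^ 2) / r ≤ p i) :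
    (∑ j, U i j ^ 2) / p i ≤ r / β := by
  rcases hp.eq_or_lt with hpi | hpi
  · rw [← hpi, div_zero]
    positivity
  rcases Nat.eq_zero_or_pos r with rfl | hr
  · simp
  rw [div_le_div_iff₀ hpi hβ]
  rw [div_le_iff₀ (by exact_mod_cast hr)] at hlev
  linarith

end LeverageSampling

theorem sc2_expectation_bound_general {N r n s : ℕ}
    (U : Matrix (Fin N) (Fin r) ℝ) (hU : Uᵀ * U = 1)
    (B : Matrix (Fin N) (Fin n) ℝ)
    (Bperp : Matrix (Fin N) (Fin n) ℝ) (hBperp : Bperp = B - U * (Uᵀ * B))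
    (Rsq : ℝ) (hRsq : Rsq = frobSq Bperp)
    (p : Fin N → ℝ) (hp0 : ∀ i, 0 ≤ p i) (hp1 : ∑ i, p i = 1)
    (β : ℝ) (hβ : β ∈ Set.Ioc (0 : ℝ) 1)
    (hlev : ∀ i, β * (∑ j, (U i j) ^ 2) / r ≤ p i) :
    ∫ ξ, frobSq (Uᵀ * (randSampleMatrix s p ξ)ᵀ * (randSampleMatrix s p ξ * Bperp))
        ∂(sampleMeasurePi s p)
      ≤ (r / (β * s)) * Rsq := by
  obtain ⟨hβ0, -⟩ := hβ
  have hUB : Uᵀ * Bperp = 0 := by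
    rw [hBperp, Matrix.mul_sub, ← Matrix.mul_assoc, hU, Matrix.one_mul, sub_self]
  rw [integral_frobSq_randSampleMatrix hp0 hp1 U Bperp hUB
    fun i hpi => row_eq_zero_of_leverage_le hβ0 (hlev i) hpi, hRsq, frobSq, Finset.mul_sum]
  refine Finset.sum_le_sum fun i _ => ?_
  calc (∑ a, U i a ^ 2) * (∑ b, Bperp i b ^ 2) / (s * p i)
      = (∑ a, U i a ^ 2) / p i / s * ∑ b, Bperp i b ^ 2 := by ring
    _ ≤ r / β / s * ∑ b, Bperp i b ^ 2 := by
      gcongr ?_ / _ * _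
      exact leverage_div_le hβ0 (hp0 i) (hlev i)
    _ = r / (β * s) * ∑ b, Bperp i b ^ 2 := by ring

/-- expectation bound toward structural condition SC2.
With leverage score sampling (`pᵢ ≥ β ℓᵢ(A)/r`),
`E[‖U_Aᵀ Sᵀ S B^⊥‖_F²] ≤ (r/(β s)) R²` where `R² = ‖B^⊥‖_F²`. -/
theorem sc2_expectation_bound {N r n s : ℕ} (hs : 0 < s)
    (A : Matrix (Fin N) (Fin r) ℝ) (hA : A.rank = r)
    (U : Matrix (Fin N) (Fin r) ℝ) (hU : Uᵀ * U = 1)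
    (hrange : LinearMap.range A.mulVecLin = LinearMap.range U.mulVecLin)
    (B : Matrix (Fin N) (Fin n) ℝ)
    (Bperp : Matrix (Fin N) (Fin n) ℝ) (hBperp : Bperp = B - U * (Uᵀ * B))
    (Rsq : ℝ) (hRsq : Rsq = frobSq Bperp)
    (p : Fin N → ℝ) (hp0 : ∀ i, 0 ≤ p i) (hp1 : ∑ i, p i = 1)
    (β : ℝ) (hβ : β ∈ Set.Ioc (0 : ℝ) 1)
    (hlev : ∀ i, β * (∑ j, (U i j) ^ 2) / r ≤ p i) :
    ∫ ξ, frobSq (Uᵀ * (randSampleMatrix s p ξ)ᵀ * (randSampleMatrix s p ξ * Bperp))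
        ∂(sampleMeasurePi s p)
      ≤ (r / (β * s)) * Rsq :=
  sc2_expectation_bound_general U hU B Bperp hBperp Rsq hRsq p hp0 hp1 β hβ hlev
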